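/- arXiv:1602.03588 — 2 statements merged into one kernel-verified Lean document; each statement's English description precedes it below -/
import Mathlib

section
/- Let (R, m) be a regular local ring that is an integral domain with fraction field K, let I be an m-primary ideal of R, and let S = (A_a)_P be a local ring of Proj(overline(R[It])) dominating R. Suppose S is a unique factorization domain and there exists a discrete valuation ring V with S ⊆ V ⊆ K such that V dominates S (m_V ∩ S = m_S) and mV equals the maximal ideal m_V of V. Then the ideal mS of S is principal. -/
/-!
Let `x₁, …, xₖ` generate `mS` and let `d` be their gcd in the UFD `S`, so `mS = d·J'` with `J'`
contained in no proper principal ideal. If `J' ≠ S`, then `J'V ⊆ m_V`, so `m_V = mV = d·J'V ⊆ d·m_V`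
and Nakayama makes `d` a unit; thus `mS = J'`. But `mⁿ ⊆ I` and `IS ⊆ aS` for a nonzero `a ∈ I`,
so `(mS)ⁿ ⊆ aS ⊆ pS` for a prime factor `p` of `a`, whence `mS ⊆ pS`: a contradiction.
-/

/-- A commutative ring is regular local if it is Noetherian, local, and its maximal
ideal can be generated by `krullDim` many elements. -/
def IsRegularLocal (A : Type*) [CommRing A] : Prop :=
  IsNoetherianRing A ∧ ∃ h : IsLocalRing A, ∃ s : Finset A,
    (s.card : WithBot (WithTop ℕ)) = ringKrullDim A ∧
    Ideal.span (s : Set A) = @IsLocalRing.maximalIdeal A _ h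

namespace Blowup

variable {K : Type*} [Field K]

/-- The set of nonunits of a subring `S` of a field `K`. -/
def nonunitsIn (S : Subring K) : Set K := {x : K | x ∈ S ∧ (x = 0 ∨ x⁻¹ ∉ S)}

/-- `mT` is the maximal ideal of the subring `T` of `K`, and `T` is local:
the ideal `mT` consists exactly of the nonunits of `T`. -/
def IsMaxIdeal (T : Subring K) (mT : Ideal T) : Prop :=
  ∀ t : T, t ∈ mT ↔ (t : K) ∈ nonunitsIn T

/-- The local ring `V` dominates the local ring `S` (as subrings of `K`):
`S ⊆ V` and the nonunits (= maximal ideal) of `V` contract to those of `S`. -/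
def Dominates (S V : Subring K) : Prop :=
  S ≤ V ∧ ∀ x : K, x ∈ S → (x ∈ nonunitsIn V ↔ x ∈ nonunitsIn S)

/-- The localization of a subring `A` of `K` at a prime ideal `P`, as a subring of `K`. -/
def locAt (A : Subring K) (P : Ideal A) (hP : P.IsPrime) : Subring K where
  carrier := {x : K | ∃ a b : A, b ∉ P ∧ (b : K) * x = (a : K)}
  zero_mem' := ⟨0, 1, fun h => hP.ne_top (Ideal.eq_top_of_isUnit_mem _ h isUnit_one), by simp⟩
  one_mem' := ⟨1, 1, fun h => hP.ne_top (Ideal.eq_top_of_isUnit_mem _ h isUnit_one), by simp⟩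
  add_mem' := by
    rintro x y ⟨a₁, b₁, hb₁, h₁⟩ ⟨a₂, b₂, hb₂, h₂⟩
    refine ⟨a₁ * b₂ + a₂ * b₁, b₁ * b₂, fun h => ?_, ?_⟩
    · rcases hP.mem_or_mem h with h | h
      exacts [hb₁ h, hb₂ h]
    · push_cast
      linear_combination (b₂ : K) * h₁ + (b₁ : K) * h₂
  mul_mem' := by
    rintro x y ⟨a₁, b₁, hb₁, h₁⟩ ⟨a₂, b₂, hb₂, h₂⟩
    refine ⟨a₁ * a₂, b₁ * b₂, fun h => ?_, ?_⟩
    · rcases hP.mem_or_mem h with h | h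
      exacts [hb₁ h, hb₂ h]
    · push_cast
      linear_combination ((b₂ : K) * y) * h₁ + (a₁ : K) * h₂
  neg_mem' := by
    rintro x ⟨a, b, hb, h⟩
    exact ⟨-a, b, hb, by push_cast; linear_combination -h⟩

/-- The chart `R[I/a]`: the subring of `K` generated by `R` and the fractions `u/a`, `u ∈ I`. -/
def chart (R : Subring K) (I : Ideal R) (a : R) : Subring K :=
  Subring.closure ((R : Set K) ∪ {x : K | ∃ u : R, u ∈ I ∧ x = (u : K) / (a : K)})

/-- The integral closure of a subring of `K` in `K`, as a subring of `K`. -/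
def intCl (A : Subring K) : Subring K := (integralClosure A K).toSubring

/-- The chart `A_a = overline{R[I/a]}` of the normalized blowup of `I`. -/
def normChart (R : Subring K) (I : Ideal R) (a : R) : Subring K :=
  intCl (chart R I a)

/-- The ideal `P` of `A` lies over the ideal `m` of `R` (i.e. `P ∩ R = m`). -/
def LiesOver (A : Subring K) (P : Ideal A) (R : Subring K) (m : Ideal R) : Prop :=
  ∀ r : R, ((r : K) ∈ Subtype.val '' (P : Set A)) ↔ r ∈ m

/-- `S` is a local ring of the normalized blowup `Proj overline{R[It]}`,
i.e. `S = (A_a)_P` for some nonzero `a ∈ I` and prime `P` of `A_a`. -/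
def IsBlowupPoint (R : Subring K) (I : Ideal R) (S : Subring K) : Prop :=
  ∃ a : R, a ≠ 0 ∧ a ∈ I ∧ ∃ (P : Ideal (normChart R I a)) (hP : P.IsPrime),
    S = locAt (normChart R I a) P hP

/-- `S` is a local ring of the normalized blowup `Proj overline{R[It]}` dominating `R`,
i.e. `S = (A_a)_P` for some nonzero `a ∈ I` and prime `P` of `A_a` with `P ∩ R = m`. -/
def IsBlowupLocalRing (R : Subring K) (I m : Ideal R) (S : Subring K) : Prop :=
  ∃ a : R, a ≠ 0 ∧ a ∈ I ∧ ∃ (P : Ideal (normChart R I a)) (hP : P.IsPrime),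
    LiesOver (normChart R I a) P R m ∧ S = locAt (normChart R I a) P hP

/-- The set of Rees valuation rings of `I`: DVRs of the form `(A_a)_P` with `P ∩ R = m`. -/
def reesSet (R : Subring K) (m I : Ideal R) : Set (Subring K) :=
  {V | IsDiscreteValuationRing V ∧ ∃ a : R, a ≠ 0 ∧ a ∈ I ∧
    ∃ (P : Ideal (normChart R I a)) (hP : P.IsPrime),
      LiesOver (normChart R I a) P R m ∧ V = locAt (normChart R I a) P hP}

/-- The `mT`-adic order of an element `t` of `T`. -/
noncomputable def ordfn (T : Subring K) (mT : Ideal T) (t : T) : ℕ :=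
  sSup {n : ℕ | t ∈ mT ^ n}

/-- `V` is the order valuation ring of the (regular) local ring `(T, mT)`:
the discrete valuation ring consisting of `0` and all fractions `a/b` of elements
of `T` with `ord a ≥ ord b`. -/
def IsOrdValRing (T : Subring K) (mT : Ideal T) (V : Subring K) : Prop :=
  IsDiscreteValuationRing V ∧ T ≤ V ∧
    ∀ x : K, x ∈ V ↔ (x = 0 ∨ ∃ a b : T, b ≠ 0 ∧
      ordfn T mT b ≤ ordfn T mT a ∧ x = (a : K) / (b : K))

/-- The extension `I·S` of an ideal `I` of `R` to an overring `S` (subrings of `K`). -/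
def extIdeal (R S : Subring K) (I : Ideal R) : Ideal S :=
  Ideal.span {s : S | (s : K) ∈ Subtype.val '' (I : Set R)}

/-- `J` is the transform `I^S` of the ideal `I` of `R` in `S`: `J = a⁻¹(IS)` where
`aS` is the smallest principal ideal of `S` containing `IS`. -/
def IsIdealTransform (R S : Subring K) (I : Ideal R) (J : Ideal S) : Prop :=
  ∃ a : S, extIdeal R S I ≤ Ideal.span {a} ∧
    (∀ b : S, extIdeal R S I ≤ Ideal.span {b} → Ideal.span {a} ≤ Ideal.span {b}) ∧
    ∀ s : S, s ∈ J ↔ a * s ∈ extIdeal R S I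

/-- `T'` is a local quadratic transform of the regular local ring `T`:
`T' = (T[m_T/x])_Q` for some `x ∈ m_T \ m_T²` and prime `Q` of `T[m_T/x]` lying over `m_T`. -/
def IsQuadraticTransform (T T' : Subring K) : Prop :=
  IsRegularLocal T ∧ ∃ (mT : Ideal T) (x : T), IsMaxIdeal T mT ∧ x ∈ mT ∧ x ∉ mT ^ 2 ∧
    ∃ (Q : Ideal (chart T mT x)) (hQ : Q.IsPrime),
      LiesOver (chart T mT x) Q T mT ∧ T' = locAt (chart T mT x) Q hQ

/-- `S` is infinitely near to `R`: `dim S ≥ 2` and `S` is obtained from `R` by a finite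
(possibly empty) sequence of local quadratic transforms. -/
def InfinitelyNear (R S : Subring K) : Prop :=
  Relation.ReflTransGen (IsQuadraticTransform (K := K)) R S ∧
    2 ≤ ringKrullDim S

/-- `S` is a base point of the ideal `I` of `R`: `S` is obtained from `R` by a finite
sequence of local quadratic transforms and the transform `I^S` is a proper ideal of `S`. -/
def IsBasePoint (R : Subring K) (I : Ideal R) (S : Subring K) : Prop :=
  Relation.ReflTransGen (IsQuadraticTransform (K := K)) R S ∧
    ∃ J : Ideal S, IsIdealTransform R S I J ∧ J ≠ ⊤

/-- The ideal `I` of `R` is finitely supported: it has only finitely many base points. -/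
def FinitelySupported (R : Subring K) (I : Ideal R) : Prop :=
  {S : Subring K | IsBasePoint R I S}.Finite

/-- The ideal `I` is `m`-primary. -/
def IsPrimaryFor (R : Subring K) (I m : Ideal R) : Prop :=
  I.IsPrimary ∧ I.radical = m

/-- The function `v` on (nonzero elements of) `K` is an additive valuation
extending the `mT`-adic order function of `T`. -/
def IsOrderValuation (T : Subring K) (mT : Ideal T) (v : K → ℤ) : Prop :=
  (∀ x y : K, x ≠ 0 → y ≠ 0 → v (x * y) = v x + v y) ∧
  (∀ x y : K, x ≠ 0 → y ≠ 0 → x + y ≠ 0 → min (v x) (v y) ≤ v (x + y)) ∧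
  (∀ t : T, (t : K) ≠ 0 → v (t : K) = ordfn T mT t)

end Blowup


section PrincipalIdeal

open Ideal IsLocalRing

variable {S : Type*} [CommRing S]

theorem Ideal.FG.exists_eq_span_singleton_mul [IsDomain S] [NormalizedGCDMonoid S]
    {J : Ideal S} (hJ : J.FG) :
    ∃ (d : S) (J' : Ideal S), J = span {d} * J' ∧ ∀ p : S, J' ≤ span {p} → IsUnit p := by
  classical
  obtain ⟨t, rfl⟩ := hJ
  rcases t.eq_empty_or_nonempty with rfl | ht
  · refine ⟨0, ⊤, by simp, fun p hp => ?_⟩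
    exact span_singleton_eq_top.mp (top_le_iff.mp hp)
  obtain ⟨g, hg, hg1⟩ := t.extract_gcd id ht
  refine ⟨t.gcd id, span (g '' t), ?_, fun p hp => ?_⟩
  · rw [span_mul_span', Set.singleton_mul, Set.image_image]
    congr 1
    ext x
    simp only [Finset.mem_coe, Set.mem_image]
    exact ⟨fun hx => ⟨x, hx, (hg x hx).symm⟩, fun ⟨b, hb, hbx⟩ => hbx ▸ (hg b hb) ▸ hb⟩
  · have hpg : p ∣ t.gcd g :=
      Finset.dvd_gcd fun b hb => mem_span_singleton.mp (hp (subset_span ⟨b, hb, rfl⟩))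
    exact isUnit_of_dvd_one (hg1 ▸ hpg)

theorem IsLocalRing.isUnit_of_maximalIdeal_le_span_singleton_mul {V : Type*} [CommRing V]
    [IsLocalRing V] [IsNoetherianRing V] (hV : maximalIdeal V ≠ ⊥) {x : V}
    (h : maximalIdeal V ≤ span {x} * maximalIdeal V) : IsUnit x := by
  by_contra hx
  refine hV (Submodule.eq_bot_of_le_smul_of_le_jacobson_bot (span {x}) _
    (IsNoetherian.noetherian _) h ?_)
  rw [jacobson_eq_maximalIdeal ⊥ bot_ne_top, span_singleton_le_iff_mem]
  exact (mem_maximalIdeal x).mpr hx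

theorem Ideal.isPrincipal_of_map_eq_maximalIdeal {V : Type*} [IsDomain S]
    [UniqueFactorizationMonoid S] [CommRing V] [IsLocalRing V] [IsNoetherianRing V]
    (hV : maximalIdeal V ≠ ⊥) (ψ : S →+* V) [IsLocalHom ψ] {J : Ideal S}
    (hJ : J.FG) (hJV : J.map ψ = maximalIdeal V) {a : S} (haJ : a ∈ J)
    (ha0 : a ≠ 0) {n : ℕ} (hn : J ^ n ≤ span {a}) : J.IsPrincipal := by
  let := UniqueFactorizationMonoid.strongNormalizationMonoid (α := S)
  let := UniqueFactorizationMonoid.toNormalizedGCDMonoid S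
  have ha : ¬IsUnit a := fun hu =>
    (mem_maximalIdeal _).mp (hJV ▸ mem_map_of_mem ψ haJ) (hu.map ψ)
  obtain ⟨d, J', rfl, hJ'⟩ := hJ.exists_eq_span_singleton_mul
  by_cases htop : J' = ⊤
  · exact ⟨d, by rw [htop, mul_top]⟩
  have hJ'V : J'.map ψ ≤ maximalIdeal V := map_le_iff_le_comap.mpr fun x hx =>
    (mem_maximalIdeal _).mpr fun hu =>
      htop (eq_top_of_isUnit_mem _ hx (isUnit_of_map_unit ψ x hu))
  have hd : IsUnit d := by
    refine isUnit_of_map_unit ψ d (isUnit_of_maximalIdeal_le_span_singleton_mul hV ?_)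
    calc maximalIdeal V = (span {d} * J').map ψ := hJV.symm
      _ = span {ψ d} * J'.map ψ := by rw [Ideal.map_mul, map_span, Set.image_singleton]
      _ ≤ span {ψ d} * maximalIdeal V := mul_mono_right hJ'V
  rw [span_singleton_eq_top.mpr hd, top_mul] at hn ⊢
  obtain ⟨p, hp, hpa⟩ := WfDvdMonoid.exists_irreducible_factor ha ha0
  have hp : Prime p := UniqueFactorizationMonoid.irreducible_iff_prime.mp hp
  have := (span_singleton_prime hp.ne_zero).mpr hp
  exact absurd (hJ' p (IsPrime.le_of_pow_le
    (hn.trans (span_singleton_le_span_singleton.mpr hpa)))) hp.not_isUnit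

end PrincipalIdeal

namespace Blowup

variable {K : Type*} [Field K]

theorem isUnit_iff_ne_zero_and_inv_mem {T : Subring K} (x : T) :
    IsUnit x ↔ (x : K) ≠ 0 ∧ (x : K)⁻¹ ∈ T := by
  refine ⟨fun ⟨u, hu⟩ => ?_, fun ⟨hx0, hinv⟩ =>
    .of_mul_eq_one ⟨_, hinv⟩ (Subtype.ext (mul_inv_cancel₀ hx0))⟩
  have hK : (x : K) * ((u⁻¹ : Tˣ) : T) = 1 := by
    rw [← hu, ← Subring.coe_mul, Units.mul_inv, Subring.coe_one]
  exact ⟨left_ne_zero_of_mul_eq_one hK, eq_inv_of_mul_eq_one_right hK ▸ Subtype.prop _⟩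

theorem mem_nonunitsIn_iff {T : Subring K} (x : T) :
    (x : K) ∈ nonunitsIn T ↔ ¬IsUnit x := by
  rw [isUnit_iff_ne_zero_and_inv_mem, nonunitsIn, Set.mem_ofPred_eq, and_iff_right x.2]
  tauto

theorem Dominates.isLocalHom {S V : Subring K} (h : Dominates S V) :
    IsLocalHom (Subring.inclusion h.1) where
  map_nonunit x hx := by
    by_contra hxS
    exact (mem_nonunitsIn_iff _).mp ((h.2 x x.2).mpr ((mem_nonunitsIn_iff x).mpr hxS)) hx

theorem extIdeal_eq_map {R T : Subring K} (h : R ≤ T) (J : Ideal R) :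
    extIdeal R T J = J.map (Subring.inclusion h) := by
  rw [extIdeal, Ideal.map]
  congr 1
  ext s
  exact ⟨fun ⟨r, hr, hrs⟩ => ⟨r, hr, Subtype.ext hrs⟩,
    fun ⟨r, hr, hrs⟩ => ⟨r, hr, congrArg Subtype.val hrs⟩⟩

theorem le_locAt (A : Subring K) (P : Ideal A) (hP : P.IsPrime) : A ≤ locAt A P hP :=
  fun x hx => ⟨⟨x, hx⟩, 1, fun h => hP.ne_top (P.eq_top_of_isUnit_mem h isUnit_one), by simp⟩

theorem le_chart (R : Subring K) (I : Ideal R) (a : R) : R ≤ chart R I a :=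
  fun _ hx => Subring.subset_closure (Or.inl hx)

theorem div_mem_chart {R : Subring K} {I : Ideal R} (a : R) {u : R} (hu : u ∈ I) :
    (u : K) / a ∈ chart R I a :=
  Subring.subset_closure (Or.inr ⟨u, hu, rfl⟩)

theorem chart_le_normChart (R : Subring K) (I : Ideal R) (a : R) :
    chart R I a ≤ normChart R I a :=
  fun x hx => Subalgebra.algebraMap_mem _ (⟨x, hx⟩ : chart R I a)

theorem IsBlowupLocalRing.isBlowupPoint {R S : Subring K} {I m : Ideal R}
    (h : IsBlowupLocalRing R I m S) : IsBlowupPoint R I S :=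
  let ⟨a, ha0, haI, P, hP, _, hS⟩ := h
  ⟨a, ha0, haI, P, hP, hS⟩

theorem IsBlowupPoint.exists_div_mem {R S : Subring K} {I : Ideal R}
    (h : IsBlowupPoint R I S) :
    R ≤ S ∧ ∃ a : R, a ≠ 0 ∧ a ∈ I ∧ ∀ u ∈ I, (u : K) / a ∈ S := by
  obtain ⟨a, ha0, haI, P, hP, rfl⟩ := h
  have hchart : chart R I a ≤ locAt (normChart R I a) P hP :=
    (chart_le_normChart R I a).trans (le_locAt _ P hP)
  exact ⟨(le_chart R I a).trans hchart, a, ha0, haI, fun u hu => hchart (div_mem_chart a hu)⟩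

theorem map_le_span_singleton_of_div_mem {R S : Subring K} (h : R ≤ S) {I : Ideal R} {a : R}
    (ha0 : a ≠ 0) (hdiv : ∀ u ∈ I, (u : K) / a ∈ S) :
    I.map (Subring.inclusion h) ≤ Ideal.span {Subring.inclusion h a} := by
  refine Ideal.map_le_iff_le_comap.mpr fun u hu => Ideal.mem_span_singleton'.mpr
    ⟨⟨_, hdiv u hu⟩, Subtype.ext ?_⟩
  have : (a : K) ≠ 0 := fun h0 => ha0 (Subtype.ext h0)
  simp [div_mul_cancel₀ _ this]

end Blowup

open Blowup in
theorem statement2_general {K : Type*} [Field K] (R : Subring K)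
    (hreg : IsRegularLocal R)
    (m : Ideal R)
    (I : Ideal R) (hprim : IsPrimaryFor R I m)
    (S : Subring K) (hS : IsBlowupLocalRing R I m S)
    (hUFD : UniqueFactorizationMonoid S)
    (V : Subring K) (hVdvr : IsDiscreteValuationRing V)
    (hdom : Dominates S V)
    (hmV : ∀ v : V, v ∈ extIdeal R V m ↔ (v : K) ∈ nonunitsIn V) :
    (extIdeal R S m).IsPrincipal := by
  have : IsNoetherianRing R := hreg.1
  have := hdom.isLocalHom
  obtain ⟨hRS, a, ha0, haI, hdiv⟩ := hS.isBlowupPoint.exists_div_mem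
  let φ := Subring.inclusion hRS
  have hmaxV : (m.map φ).map (Subring.inclusion hdom.1) = IsLocalRing.maximalIdeal V := by
    rw [Ideal.map_map]
    change m.map (Subring.inclusion (hRS.trans hdom.1)) = _
    ext v
    rw [← extIdeal_eq_map, hmV, mem_nonunitsIn_iff, IsLocalRing.mem_maximalIdeal,
      mem_nonunits_iff]
  obtain ⟨n, hn⟩ : ∃ n, m ^ n ≤ I :=
    hprim.2 ▸ I.exists_radical_pow_le_of_fg (hprim.2 ▸ IsNoetherian.noetherian m)
  rw [extIdeal_eq_map hRS]
  refine Ideal.isPrincipal_of_map_eq_maximalIdeal (IsDiscreteValuationRing.not_a_field V) _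
    (Ideal.FG.map (IsNoetherian.noetherian m) φ) hmaxV
    (Ideal.mem_map_of_mem φ (hprim.2 ▸ Ideal.le_radical haI)) (a := φ a)
    ((map_ne_zero_iff φ (Subring.inclusion_injective hRS)).mpr ha0) (n := n) ?_
  calc m.map φ ^ n = (m ^ n).map φ := (Ideal.map_pow φ m n).symm
    _ ≤ I.map φ := Ideal.map_mono hn
    _ ≤ Ideal.span {φ a} := map_le_span_singleton_of_div_mem hRS ha0 hdiv

open Blowup in
/-- (Lemma 2.10) Let `S` be a local ring of the normalized blowup of an
`m`-primary ideal `I` dominating `R`. If `S` is a UFD and there is a DVR `V` dominating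
`S` such that `mV` is the maximal ideal of `V`, then `mS` is principal. -/
theorem statement2 {K : Type*} [Field K] (R : Subring K)
    (hreg : IsRegularLocal R) (hfrac : IsFractionRing R K)
    (m : Ideal R) (hm : IsMaxIdeal R m)
    (I : Ideal R) (hprim : IsPrimaryFor R I m)
    (S : Subring K) (hS : IsBlowupLocalRing R I m S)
    (hUFD : UniqueFactorizationMonoid S)
    (V : Subring K) (hVdvr : IsDiscreteValuationRing V)
    (hdom : Dominates S V)
    (hmV : ∀ v : V, v ∈ extIdeal R V m ↔ (v : K) ∈ nonunitsIn V) :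
    (extIdeal R S m).IsPrincipal :=
  statement2_general R hreg m I hprim S hS hUFD V hVdvr hdom hmV
end

section
/- Let (R, m) be a regular local ring that is an integral domain with fraction field K, let V = ord_R be the order valuation ring of R, and let I be an m-primary ideal of R. Let S = (A_a)_P be a local ring of Proj(overline(R[It])) that is dominated by V, i.e., S ⊆ V and m_V ∩ S = m_S. If S is a unique factorization domain, then S = V; in particular, V is a Rees valuation ring of I. -/
/-!
Let `x ∈ m \ m²`, so that `ord x = 1` and `x` is a uniformizer of `V = ord_R`: every element of
`R` is `x ^ ord r` times a unit of `V`. Since `I` is `m`-primary and `a ∈ I`, the fractions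
`u / a` (`u ∈ I`) lie in `S`, so any prime factor `q` of `a` in the UFD `S` divides every element
of `m`. Writing `x = q t` in `S`, domination forces `q` into the maximal ideal of `V`, hence `t`
is a unit of `V` and then of `S`. Consequently every `r ∈ R` is `q ^ ord r` times an element of
`S`, and for `ord z ≤ ord y` the cofactor of `z` is a unit of `S`, so `y / z ∈ S`: `V ⊆ S`.
-/

theorem Ideal.exists_mem_notMem_sq {A : Type*} [CommRing A] [IsDomain A] [IsNoetherianRing A]
    {m : Ideal A} (hm : m ≠ ⊤) (hm' : m ≠ ⊥) : ∃ x ∈ m, x ∉ m ^ 2 := by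
  by_contra! h
  have hidem : IsIdempotentElem m := le_antisymm Ideal.mul_le_left (sq m ▸ h)
  have : m ≤ ⨅ i : ℕ, m ^ i := le_iInf fun
    | 0 => by simp
    | i + 1 => (hidem.pow_succ_eq i).ge
  exact hm' (eq_bot_iff.mpr (Ideal.iInf_pow_eq_bot_of_isDomain m hm ▸ this))

namespace Blowup

variable {K : Type*} [Field K]

theorem IsMaxIdeal.ne_top {T : Subring K} {mT : Ideal T} (h : IsMaxIdeal T mT) : mT ≠ ⊤ := by
  intro htop
  obtain ⟨-, h01 | h1⟩ := (h 1).mp (htop ▸ Submodule.mem_top)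
  · exact one_ne_zero h01
  · exact h1 (by simp)

theorem Dominates.inv_mem {S V : Subring K} (h : Dominates S V) {s : K} (hs : s ∈ S)
    (hsV : s⁻¹ ∈ V) : s⁻¹ ∈ S := by
  by_contra hsS
  obtain ⟨-, hs0 | hsV'⟩ := (h.2 s hs).mpr ⟨hs, Or.inr hsS⟩
  · exact hsS (by simp [hs0])
  · exact hsV' hsV

theorem Subring.isUnit_iff_inv_mem {S : Subring K} {s : S} (hs : s ≠ 0) :
    IsUnit s ↔ (s : K)⁻¹ ∈ S := by
  have hsK : (s : K) ≠ 0 := by exact_mod_cast hs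
  refine ⟨fun ⟨u, hu⟩ => ?_,
    fun hinv => IsUnit.of_mul_eq_one (⟨_, hinv⟩ : S) (by ext; simp [hsK])⟩
  rw [← hu, inv_eq_of_mul_eq_one_right (congrArg Subtype.val u.mul_inv)]
  exact (u⁻¹ : Sˣ).1.2

theorem exists_eq_pow_mul_of_mem_pow {T S : Subring K} (hTS : T ≤ S) {m : Ideal T} {y : K}
    (hy : y ∈ S) (hm : ∀ r ∈ m, ∃ s ∈ S, (r : K) = y * s) {n : ℕ} {r : T} (hr : r ∈ m ^ n) :
    ∃ s ∈ S, (r : K) = y ^ n * s := by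
  let φ := Subring.inclusion hTS
  have hle : m ≤ (Ideal.span {(⟨y, hy⟩ : S)}).comap φ := fun r hr => by
    obtain ⟨s, hs, hrs⟩ := hm r hr
    exact Ideal.mem_span_singleton'.mpr ⟨⟨s, hs⟩, Subtype.ext (by simp [φ, hrs, mul_comm])⟩
  have := Ideal.le_comap_pow φ n (Ideal.pow_right_mono hle n hr)
  rw [Ideal.span_singleton_pow, Ideal.mem_comap, Ideal.mem_span_singleton'] at this
  obtain ⟨s, hs⟩ := this
  exact ⟨s, s.2, by simpa [φ, mul_comm] using (congrArg Subtype.val hs).symm⟩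

section OrderFunction

variable {T : Subring K} [IsNoetherianRing T] {mT : Ideal T}

theorem bddAbove_setOf_mem_pow (hmT : mT ≠ ⊤) {t : T} (ht : t ≠ 0) :
    BddAbove {n : ℕ | t ∈ mT ^ n} := by
  by_contra hunb
  have : t ∈ ⨅ i : ℕ, mT ^ i := (Submodule.mem_iInf _).mpr fun N => by
    obtain ⟨n, hn, hNn⟩ := not_bddAbove_iff.mp hunb N
    exact Ideal.pow_le_pow_right hNn.le hn
  rw [Ideal.iInf_pow_eq_bot_of_isDomain mT hmT] at this
  exact ht this

theorem mem_pow_ordfn (hmT : mT ≠ ⊤) {t : T} (ht : t ≠ 0) : t ∈ mT ^ ordfn T mT t :=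
  Nat.sSup_mem ⟨0, by simp⟩ (bddAbove_setOf_mem_pow hmT ht)

theorem le_ordfn (hmT : mT ≠ ⊤) {t : T} (ht : t ≠ 0) {n : ℕ} (h : t ∈ mT ^ n) :
    n ≤ ordfn T mT t :=
  le_csSup (bddAbove_setOf_mem_pow hmT ht) h

theorem ordfn_add_le_ordfn_mul (hmT : mT ≠ ⊤) {s t : T} (hs : s ≠ 0) (ht : t ≠ 0) :
    ordfn T mT s + ordfn T mT t ≤ ordfn T mT (s * t) :=
  le_ordfn hmT (mul_ne_zero hs ht)
    (pow_add mT _ _ ▸ Ideal.mul_mem_mul (mem_pow_ordfn hmT hs) (mem_pow_ordfn hmT ht))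

theorem exists_ordfn_eq_one (hmT : mT ≠ ⊤) (hmT' : mT ≠ ⊥) :
    ∃ x ∈ mT, x ≠ 0 ∧ ordfn T mT x = 1 := by
  obtain ⟨x, hxm, hxm2⟩ := Ideal.exists_mem_notMem_sq hmT hmT'
  have hx0 : x ≠ 0 := by rintro rfl; exact hxm2 (zero_mem _)
  refine ⟨x, hxm, hx0, le_antisymm ?_ (le_ordfn hmT hx0 (by rwa [pow_one]))⟩
  by_contra! h
  exact hxm2 (Ideal.pow_le_pow_right h (mem_pow_ordfn hmT hx0))

end OrderFunction

theorem inv_mem_of_eq_mul {V : Subring K} {x q t : K} (hx : x⁻¹ ∉ V)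
    (hxV : ∀ ξ ∈ V, ξ ≠ 0 → ∃ k : ℕ, ∃ w ∈ V, w⁻¹ ∈ V ∧ ξ = x ^ k * w)
    (hq : q ∈ V) (hq' : q⁻¹ ∉ V) (ht : t ∈ V) (hxqt : x = q * t) : t⁻¹ ∈ V := by
  have hx0 : x ≠ 0 := by rintro rfl; simp at hx
  obtain ⟨hq0, ht0⟩ := mul_ne_zero_iff.mp (hxqt ▸ hx0)
  obtain ⟨_ | k, w, hw, hw', rfl⟩ := hxV q hq hq0
  · exact absurd (by simpa using hw') hq'
  obtain ⟨_ | l, u, hu, hu', rfl⟩ := hxV t ht ht0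
  · simpa using hu'
  refine absurd ?_ hx
  have hxinv : x⁻¹ = x ^ (k + l) * (w * u) := by
    refine inv_eq_of_mul_eq_one_right (mul_left_cancel₀ hx0 ?_)
    linear_combination -hxqt
  exact hxinv ▸ V.mul_mem (V.pow_mem (hxqt ▸ V.mul_mem hq ht) _) (V.mul_mem hw hu)

namespace IsOrdValRing

variable {T V : Subring K} {mT : Ideal T}

theorem div_mem (hV : IsOrdValRing T mT V) {a b : T} (hb : b ≠ 0)
    (hab : ordfn T mT b ≤ ordfn T mT a) : (a : K) / b ∈ V :=
  (hV.2.2 _).mpr (Or.inr ⟨a, b, hb, hab, rfl⟩)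

theorem inv_notMem [IsNoetherianRing T] (hV : IsOrdValRing T mT V) (hmT : mT ≠ ⊤) {r : T}
    (hr : r ∈ mT) (hr0 : r ≠ 0) : (r : K)⁻¹ ∉ V := by
  intro hinv
  have hrK : (r : K) ≠ 0 := by exact_mod_cast hr0
  obtain h0 | ⟨y, z, hz0, hle, heq⟩ := (hV.2.2 _).mp hinv
  · exact inv_ne_zero hrK h0
  have hy0 : y ≠ 0 := by rintro rfl; simp [hrK] at heq
  have hzyr : z = y * r := by
    have hzK : (z : K) ≠ 0 := by exact_mod_cast hz0
    ext; field_simp at heq; push_cast; linear_combination heq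
  have hr1 : 1 ≤ ordfn T mT r := le_ordfn hmT hr0 (by rwa [pow_one])
  have := hzyr ▸ ordfn_add_le_ordfn_mul hmT hy0 hr0
  omega

theorem exists_eq_pow_ordfn_mul [IsNoetherianRing T] (hV : IsOrdValRing T mT V)
    (hmT : mT ≠ ⊤) {x : T} (hx0 : x ≠ 0) (hx : ordfn T mT x = 1) {r : T} (hr : r ≠ 0) :
    ∃ w ∈ V, w⁻¹ ∈ V ∧ (r : K) = x ^ ordfn T mT r * w := by
  have hxK : (x : K) ≠ 0 := by exact_mod_cast hx0
  have hmx : ∀ y ∈ mT, ∃ v ∈ V, (y : K) = x * v := fun y hy => by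
    rcases eq_or_ne y 0 with rfl | hy0
    · exact ⟨0, V.zero_mem, by simp⟩
    refine ⟨y / x, hV.div_mem hx0 (hx ▸ le_ordfn hmT hy0 (by rwa [pow_one])), ?_⟩
    field_simp
  obtain ⟨w, hw, hrw⟩ :=
    exists_eq_pow_mul_of_mem_pow hV.2.1 (hV.2.1 x.2) hmx (mem_pow_ordfn hmT hr)
  refine ⟨w, hw, ?_, hrw⟩
  have hxm : x ∈ mT := by simpa [hx] using mem_pow_ordfn hmT hx0
  have hxr : ordfn T mT r ≤ ordfn T mT (x ^ ordfn T mT r) :=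
    le_ordfn hmT (pow_ne_zero _ hx0) (Ideal.pow_mem_pow hxm _)
  have hrK : (r : K) ≠ 0 := by exact_mod_cast hr
  have hw0 : w ≠ 0 := by rintro rfl; simp [hrK] at hrw
  convert hV.div_mem hr hxr using 1
  push_cast
  field_simp
  linear_combination hrw

theorem exists_eq_pow_mul [IsNoetherianRing T] (hV : IsOrdValRing T mT V) (hmT : mT ≠ ⊤)
    {x : T} (hx0 : x ≠ 0) (hx : ordfn T mT x = 1) {ξ : K} (hξ : ξ ∈ V) (hξ0 : ξ ≠ 0) :
    ∃ k : ℕ, ∃ w ∈ V, w⁻¹ ∈ V ∧ ξ = x ^ k * w := by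
  obtain h0 | ⟨y, z, hz0, hle, rfl⟩ := (hV.2.2 ξ).mp hξ
  · exact absurd h0 hξ0
  have hy0 : y ≠ 0 := by rintro rfl; simp at hξ0
  obtain ⟨u, hu, hu', hyu⟩ := hV.exists_eq_pow_ordfn_mul hmT hx0 hx hy0
  obtain ⟨w, hw, hw', hzw⟩ := hV.exists_eq_pow_ordfn_mul hmT hx0 hx hz0
  obtain ⟨k, hk⟩ := Nat.exists_eq_add_of_le hle
  have hxK : (x : K) ≠ 0 := by exact_mod_cast hx0
  have hzK : (z : K) ≠ 0 := by exact_mod_cast hz0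
  have hw0 : w ≠ 0 := by rintro rfl; simp [hzK] at hzw
  refine ⟨k, u * w⁻¹, V.mul_mem hu hw', by simpa [mul_comm] using V.mul_mem hu' hw, ?_⟩
  rw [hyu, hzw, hk, pow_add]
  field_simp

theorem le_of_dominates [IsNoetherianRing T] (hV : IsOrdValRing T mT V)
    (hmT : mT ≠ ⊤) {x : T} (hx0 : x ≠ 0) (hx : ordfn T mT x = 1) {S : Subring K}
    (hdom : Dominates S V) (hTS : T ≤ S) {q u : K} (hq : q ∈ S)
    (hqm : ∀ r ∈ mT, ∃ s ∈ S, (r : K) = q * s) (hu : u ∈ S) (hqxu : q = x * u) :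
    V ≤ S := by
  intro ξ hξ
  obtain rfl | ⟨y, z, hz0, hle, rfl⟩ := (hV.2.2 ξ).mp hξ
  · exact S.zero_mem
  rcases eq_or_ne y 0 with rfl | hy0
  · simp
  obtain ⟨y', hy', hyq⟩ := exists_eq_pow_mul_of_mem_pow hTS hq hqm
    (Ideal.pow_le_pow_right hle (mem_pow_ordfn hmT hy0))
  obtain ⟨z', hz', hzq⟩ := exists_eq_pow_mul_of_mem_pow hTS hq hqm (mem_pow_ordfn hmT hz0)
  obtain ⟨w, hw, hw', hzx⟩ := hV.exists_eq_pow_ordfn_mul hmT hx0 hx hz0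
  have hxn : (x : K) ^ ordfn T mT z ≠ 0 := pow_ne_zero _ (by exact_mod_cast hx0)
  -- `x ^ n w = z = q ^ n z' = x ^ n u ^ n z'` with `n = ord z`, so the cofactor `w` lies in `S`
  have hwz : w = u ^ ordfn T mT z * z' := by
    refine mul_left_cancel₀ hxn ?_
    rw [← hzx, hzq, hqxu]
    ring
  have hwS : w⁻¹ ∈ S := hdom.inv_mem (hwz ▸ S.mul_mem (S.pow_mem hu _) hz') hw'
  have hξ : (y : K) / z = u ^ ordfn T mT z * y' * w⁻¹ := by
    rw [hyq, hzx, hqxu, div_eq_mul_inv, mul_inv, mul_pow]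
    field_simp
  exact hξ ▸ S.mul_mem (S.mul_mem (S.pow_mem hu _) hy') hwS

end IsOrdValRing

theorem inv_mem_locAt_iff {A : Subring K} {P : Ideal A} {hP : P.IsPrime} {β : A} (hβ : β ≠ 0) :
    (β : K)⁻¹ ∈ locAt A P hP ↔ β ∉ P := by
  have hβK : (β : K) ≠ 0 := by exact_mod_cast hβ
  refine ⟨fun ⟨α, γ, hγ, hγα⟩ hβP => hγ ?_, fun hβP => ⟨1, β, hβP, by simp [hβK]⟩⟩
  have : γ = α * β := by ext; push_cast; rw [← hγα]; field_simp
  exact this ▸ P.mul_mem_left α hβP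

theorem liesOver_of_inv_notMem_locAt {A R : Subring K} {P : Ideal A} {hP : P.IsPrime}
    {m : Ideal R} (hm : IsMaxIdeal R m) (hRA : R ≤ A)
    (hinv : ∀ r ∈ m, r ≠ 0 → (r : K)⁻¹ ∉ locAt A P hP) : LiesOver A P R m := by
  intro r
  rcases eq_or_ne r 0 with rfl | hr0
  · exact iff_of_true ⟨0, P.zero_mem, rfl⟩ m.zero_mem
  have hrK : (r : K) ≠ 0 := by exact_mod_cast hr0
  constructor
  · rintro ⟨p, hp, hpr⟩
    by_contra hrm
    have hr' : (r : K)⁻¹ ∈ R := by simpa [nonunitsIn, hrK] using mt (hm r).mpr hrm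
    have hp0 : p ≠ 0 := by rintro rfl; exact hrK hpr.symm
    exact (inv_mem_locAt_iff hp0).mp (hpr ▸ le_locAt A P hP (hRA hr')) hp
  · intro hrm
    refine ⟨⟨r, hRA r.2⟩, ?_, rfl⟩
    by_contra hrP
    exact hinv r hrm hr0 ((inv_mem_locAt_iff (by simpa using hr0)).mpr hrP)

theorem le_normChart (R : Subring K) (I : Ideal R) (a : R) : R ≤ normChart R I a :=
  fun _ hr => chart_le_normChart R I a (Subring.subset_closure (Or.inl hr))

theorem div_mem_normChart {R : Subring K} {I : Ideal R} (a : R) {u : R} (hu : u ∈ I) :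
    (u : K) / a ∈ normChart R I a :=
  chart_le_normChart R I a (Subring.subset_closure (Or.inr ⟨u, hu, rfl⟩))

theorem exists_prime_dvd_of_mem_radical {R S : Subring K} [UniqueFactorizationMonoid S]
    (hRS : R ≤ S) {I : Ideal R} {a : R} (ha0 : a ≠ 0) (ha : (a : K)⁻¹ ∉ S)
    (hIa : ∀ u ∈ I, (u : K) / a ∈ S) :
    ∃ q ∈ S, q⁻¹ ∉ S ∧ ∀ r ∈ I.radical, ∃ s ∈ S, (r : K) = q * s := by
  let a' : S := ⟨a, hRS a.2⟩
  have ha'0 : a' ≠ 0 := fun h => ha0 (Subtype.ext (congrArg Subtype.val h : (a : K) = 0))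
  have ha'u : ¬IsUnit a' := by rwa [Subring.isUnit_iff_inv_mem ha'0]
  obtain ⟨q, hqirr, hqa⟩ := WfDvdMonoid.exists_irreducible_factor ha'u ha'0
  have hq : Prime q := UniqueFactorizationMonoid.irreducible_iff_prime.mp hqirr
  refine ⟨q, q.2, (Subring.isUnit_iff_inv_mem hq.ne_zero).not.mp hq.not_isUnit,
    fun r ⟨n, hn⟩ => ?_⟩
  have hdvd : a' ∣ (⟨r, hRS r.2⟩ : S) ^ n :=
    ⟨⟨_, hIa _ hn⟩, by ext; push_cast [a']; field_simp [show (a : K) ≠ 0 by exact_mod_cast ha0]⟩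
  obtain ⟨s, hs⟩ := hq.dvd_of_dvd_pow (hqa.trans hdvd)
  exact ⟨s, s.2, congrArg Subtype.val hs⟩

end Blowup

open Blowup in
theorem statement3_general {K : Type*} [Field K] (R : Subring K)
    (hreg : IsRegularLocal R)
    (m : Ideal R) (hm : IsMaxIdeal R m)
    (V : Subring K) (hV : IsOrdValRing R m V)
    (I : Ideal R) (hprim : IsPrimaryFor R I m)
    (S : Subring K) (hS : IsBlowupPoint R I S) (hdom : Dominates S V)
    (hUFD : UniqueFactorizationMonoid S) :
    S = V ∧ V ∈ reesSet R m I := by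
  have : IsNoetherianRing R := hreg.1
  obtain ⟨a, ha0, haI, P, hP, rfl⟩ := hS
  have hmT : m ≠ ⊤ := hm.ne_top
  have ham : a ∈ m := hprim.2 ▸ Ideal.le_radical haI
  obtain ⟨x, hxm, hx0, hx⟩ :=
    exists_ordfn_eq_one hmT ((Submodule.ne_bot_iff m).mpr ⟨a, ham, ha0⟩)
  have hRS : R ≤ locAt _ P hP := (le_normChart R I a).trans (le_locAt _ P hP)
  obtain ⟨q, hq, hq', hqm⟩ := exists_prime_dvd_of_mem_radical hRS ha0
    (fun h => hV.inv_notMem hmT ham ha0 (hdom.1 h))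
    fun u hu => le_locAt _ P hP (div_mem_normChart a hu)
  rw [hprim.2] at hqm
  obtain ⟨t, ht, hxqt⟩ := hqm x hxm
  have ht0 : t ≠ 0 := right_ne_zero_of_mul (hxqt ▸ (by exact_mod_cast hx0 : (x : K) ≠ 0))
  have htV : t⁻¹ ∈ V := inv_mem_of_eq_mul (hV.inv_notMem hmT hxm hx0)
    (fun ξ => hV.exists_eq_pow_mul hmT hx0 hx) (hdom.1 hq) (mt (hdom.inv_mem hq) hq')
    (hdom.1 ht) hxqt
  have hSV : locAt _ P hP = V := le_antisymm hdom.1 <|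
    hV.le_of_dominates hmT hx0 hx hdom hRS hq hqm (hdom.inv_mem ht htV)
      ((eq_mul_inv_iff_mul_eq₀ ht0).mpr hxqt.symm)
  refine ⟨hSV, hV.1, a, ha0, haI, P, hP, ?_, hSV.symm⟩
  exact liesOver_of_inv_notMem_locAt hm (le_normChart R I a) fun r hr hr0 =>
    hSV ▸ hV.inv_notMem hmT hr hr0

open Blowup in
/-- (Corollary 2.11) Let `V = ord_R` be the order valuation ring of `R`
and `I` an `m`-primary ideal. If the local ring `S` of the normalized blowup dominated by
`V` is a UFD, then `S = V`; in particular `V` is a Rees valuation ring of `I`. -/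
theorem statement3 {K : Type*} [Field K] (R : Subring K)
    (hreg : IsRegularLocal R) (hfrac : IsFractionRing R K)
    (m : Ideal R) (hm : IsMaxIdeal R m)
    (V : Subring K) (hV : IsOrdValRing R m V)
    (I : Ideal R) (hprim : IsPrimaryFor R I m)
    (S : Subring K) (hS : IsBlowupPoint R I S) (hdom : Dominates S V)
    (hUFD : UniqueFactorizationMonoid S) :
    S = V ∧ V ∈ reesSet R m I :=
  statement3_general R hreg m hm V hV I hprim S hS hdom hUFD
end
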